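/- arXiv:1801.01014 — 2 statements merged into one kernel-verified Lean document; each statement's English description precedes it below -/
import Mathlib

section
/- Let G=G(w) be a finite, connected, metrizable weighted graph and let μ, ν be distinct non-adjacent vertices of G. Then {μ,ν} ∈ E^{un}(G) if and only if there exists a cycle C ⊆ G such that μ, ν ∈ V(C) and Σ_{e∈E(C)} w(e) = 2 max_{e∈E(C)} w(e). -/
/-!
If a closed walk `C` through `μ` and `ν` weighs twice one of its edges `e₀`, then for every
`D ∈ M(w)` the triangle inequality around `e₀` forces `D(μ,ν)` to be the weight of the arc of `C`
from `μ` to `ν` avoiding `e₀`.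

Conversely, let `d` be the shortest-path metric, the largest element of `M(w)`. For
`0 < t < d(μ,ν)`, joining `μ` and `ν` by a new edge of length `t` gives a metric in `M(w)` with
value at most `t` at `(μ,ν)`, unless some edge `ab` becomes too short:
`d(a,μ) + t + d(ν,b) < w(ab)`. As there are finitely many edges, uniqueness yields an edge `ab`
with `d(a,μ) + d(μ,ν) + d(ν,b) ≤ w(ab)`, and `ab` closes shortest paths `a → μ → ν → b` into a
cycle in which `ab` weighs half the total.
-/

/-- `D` belongs to `M(w)`: `D` is a metric on `V(G)` agreeing with the weight `w` on
every edge of `G`. -/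
def GraphMetric {V : Type*} (G : SimpleGraph V) (w : Sym2 V → ℝ) (D : V → V → ℝ) : Prop :=
  (∀ u, D u u = 0) ∧ (∀ u v : V, u ≠ v → 0 < D u v) ∧ (∀ u v : V, D u v = D v u) ∧
  (∀ u v z : V, D u z ≤ D u v + D v z) ∧ ∀ u v : V, G.Adj u v → D u v = w s(u, v)

open SimpleGraph

namespace SimpleGraph.Walk

variable {V : Type*} {G : SimpleGraph V} (w : Sym2 V → ℝ)

def weight {u v : V} (p : G.Walk u v) : ℝ := (p.edges.map w).sum

@[simp] lemma weight_nil {u : V} : (nil : G.Walk u u).weight w = 0 := by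
  simp [weight]

@[simp] lemma weight_cons {u v x : V} (h : G.Adj u v) (p : G.Walk v x) :
    (cons h p).weight w = w s(u, v) + p.weight w := by
  simp [weight]

lemma weight_append {u v x : V} (p : G.Walk u v) (q : G.Walk v x) :
    (p.append q).weight w = p.weight w + q.weight w := by
  simp [weight]

@[simp] lemma weight_reverse {u v : V} (p : G.Walk u v) : p.reverse.weight w = p.weight w := by
  simp [weight, List.sum_reverse]

lemma weight_rotate [DecidableEq V] {u v : V} (c : G.Walk v v) (h : u ∈ c.support) :
    (c.rotate u h).weight w = c.weight w :=
  ((c.rotate_edges u h).perm.map w).sum_eq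

variable {w}

lemma le_weight_of_mem_edges (hw : ∀ e ∈ G.edgeSet, 0 ≤ w e) {u v : V} {p : G.Walk u v}
    {e : Sym2 V} (he : e ∈ p.edges) : w e ≤ p.weight w :=
  List.single_le_sum (by simpa using fun f hf => hw f (p.edges_subset_edgeSet hf)) _
    (List.mem_map_of_mem he)

lemma weight_bypass_le [DecidableEq V] (hw : ∀ e ∈ G.edgeSet, 0 ≤ w e) {u v : V}
    (p : G.Walk u v) : p.bypass.weight w ≤ p.weight w :=
  (p.edges_bypass_sublist_edges.map w).sum_le_sum
    (by simpa using fun f hf => hw f (p.edges_subset_edgeSet hf))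

lemma weight_nonneg (hw : ∀ e ∈ G.edgeSet, 0 ≤ w e) {u v : V} (p : G.Walk u v) :
    0 ≤ p.weight w :=
  List.sum_nonneg (by simpa using fun f hf => hw f (p.edges_subset_edgeSet hf))

lemma exists_weight_lt_of_not_isPath [DecidableEq V] (hw : ∀ e ∈ G.edgeSet, 0 < w e)
    {u v : V} {p : G.Walk u v} (hp : ¬p.IsPath) : ∃ q : G.Walk u v, q.weight w < p.weight w := by
  induction p with
  | nil => exact absurd IsPath.nil hp
  | @cons a b c h q ih =>
    by_cases hq : q.IsPath
    · have ha : a ∈ q.support := by simpa [cons_isPath_iff, hq] using hp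
      refine ⟨q.dropUntil a ha, ?_⟩
      have hsplit := weight_append w (q.takeUntil a ha) (q.dropUntil a ha)
      rw [q.take_spec ha] at hsplit
      rw [weight_cons]
      linarith [weight_nonneg (fun e he => (hw e he).le) (q.takeUntil a ha),
        hw _ (G.mem_edgeSet.2 h)]
    · obtain ⟨q', hq'⟩ := ih hq
      exact ⟨cons h q', by simpa using hq'⟩

end SimpleGraph.Walk

namespace GraphMetric

variable {V : Type*} {G : SimpleGraph V} {w : Sym2 V → ℝ} {D : V → V → ℝ}

lemma dist_self (hD : GraphMetric G w D) (u : V) : D u u = 0 := hD.1 u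

lemma dist_pos (hD : GraphMetric G w D) {u v : V} (h : u ≠ v) : 0 < D u v := hD.2.1 u v h

lemma dist_comm (hD : GraphMetric G w D) (u v : V) : D u v = D v u := hD.2.2.1 u v

lemma dist_triangle (hD : GraphMetric G w D) (u v x : V) : D u x ≤ D u v + D v x :=
  hD.2.2.2.1 u v x

lemma dist_eq_weight (hD : GraphMetric G w D) {u v : V} (h : G.Adj u v) : D u v = w s(u, v) :=
  hD.2.2.2.2 u v h

lemma dist_nonneg (hD : GraphMetric G w D) (u v : V) : 0 ≤ D u v := by
  linarith [hD.dist_triangle u v u, hD.dist_self u, hD.dist_comm u v]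

lemma dist_eq_zero_iff (hD : GraphMetric G w D) {u v : V} : D u v = 0 ↔ u = v :=
  ⟨fun h => by_contra fun huv => (hD.dist_pos huv).ne' h, fun h => h ▸ hD.dist_self u⟩

lemma weight_pos (hD : GraphMetric G w D) {e : Sym2 V} (he : e ∈ G.edgeSet) : 0 < w e := by
  induction e using Sym2.ind with
  | _ u v => rw [← hD.dist_eq_weight he]; exact hD.dist_pos (G.ne_of_adj he)

lemma dist_le_weight (hD : GraphMetric G w D) {u v : V} (p : G.Walk u v) :
    D u v ≤ p.weight w := by
  induction p with
  | nil => simp [hD.dist_self]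
  | @cons a b c h q ih =>
    rw [Walk.weight_cons, ← hD.dist_eq_weight h]
    linarith [hD.dist_triangle a b c]

lemma two_mul_le_dist_add_weight (hD : GraphMetric G w D) {u v : V} (p : G.Walk u v)
    {e : Sym2 V} (he : e ∈ p.edges) : 2 * w e ≤ D u v + p.weight w := by
  induction p with
  | nil => simp at he
  | @cons a b c h q ih =>
    rw [Walk.edges_cons, List.mem_cons] at he
    rw [Walk.weight_cons]
    rcases he with rfl | he
    · linarith [hD.dist_le_weight q, hD.dist_triangle a c b, hD.dist_comm c b,
        hD.dist_eq_weight h]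
    · linarith [ih he, hD.dist_triangle b a c, hD.dist_comm b a, hD.dist_eq_weight h]

end GraphMetric

lemma SimpleGraph.Walk.graphMetric_dist_unique_of_weight_eq_two_mul {V : Type*}
    {G : SimpleGraph V} {w : Sym2 V → ℝ} {μ ν : V} (W : G.Walk μ μ) (hν : ν ∈ W.support)
    {e₀ : Sym2 V} (he₀ : e₀ ∈ W.edges) (hW : W.weight w = 2 * w e₀) (D₁ D₂ : V → V → ℝ)
    (hD₁ : GraphMetric G w D₁) (hD₂ : GraphMetric G w D₂) : D₁ μ ν = D₂ μ ν := by
  classical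
  suffices ∃ r, ∀ D, GraphMetric G w D → D μ ν = r by
    obtain ⟨r, hr⟩ := this
    rw [hr D₁ hD₁, hr D₂ hD₂]
  set A := W.takeUntil ν hν
  set B := W.dropUntil ν hν
  have hAB : A.weight w + B.weight w = 2 * w e₀ := by
    rw [← Walk.weight_append, W.take_spec hν, hW]
  have he₀' : e₀ ∈ A.edges ∨ e₀ ∈ B.edges := by
    rw [← List.mem_append, ← Walk.edges_append, W.take_spec hν]
    exact he₀
  rcases he₀' with hA | hB
  · refine ⟨B.weight w, fun D hD => ?_⟩
    linarith [hD.two_mul_le_dist_add_weight A hA, hD.dist_le_weight B, hD.dist_comm μ ν]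
  · refine ⟨A.weight w, fun D hD => ?_⟩
    linarith [hD.two_mul_le_dist_add_weight B hB, hD.dist_le_weight A, hD.dist_comm μ ν]

section Shortcut

variable {V : Type*} {G : SimpleGraph V} {w : Sym2 V → ℝ} {d : V → V → ℝ} {μ ν : V} {t : ℝ}

/-- The distance `d` after joining `μ` and `ν` by a new edge of length `t`. -/
def shortcutDist (d : V → V → ℝ) (μ ν : V) (t : ℝ) (x y : V) : ℝ :=
  min (d x y) (min (d x μ + t + d ν y) (d x ν + t + d μ y))

lemma shortcutDist_eq_or (d : V → V → ℝ) (μ ν : V) (t : ℝ) (x y : V) :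
    shortcutDist d μ ν t x y = d x y ∨ shortcutDist d μ ν t x y = d x μ + t + d ν y ∨
      shortcutDist d μ ν t x y = d x ν + t + d μ y := by
  unfold shortcutDist
  rcases min_choice (d x y) (min (d x μ + t + d ν y) (d x ν + t + d μ y)) with h | h <;> rw [h]
  · exact Or.inl rfl
  · exact Or.inr (min_choice _ _)

lemma GraphMetric.shortcutDist_triangle (hd : GraphMetric G w d) (ht : 0 ≤ t) (x y z : V) :
    shortcutDist d μ ν t x z ≤ shortcutDist d μ ν t x y + shortcutDist d μ ν t y z := by
  have h₁ : shortcutDist d μ ν t x z ≤ d x z := min_le_left _ _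
  have h₂ : shortcutDist d μ ν t x z ≤ d x μ + t + d ν z :=
    (min_le_right _ _).trans (min_le_left _ _)
  have h₃ : shortcutDist d μ ν t x z ≤ d x ν + t + d μ z :=
    (min_le_right _ _).trans (min_le_right _ _)
  have hd₀ := hd.dist_nonneg
  rcases shortcutDist_eq_or d μ ν t x y with hxy | hxy | hxy <;>
    rcases shortcutDist_eq_or d μ ν t y z with hyz | hyz | hyz <;>
    linarith [hd.dist_triangle x y z, hd.dist_triangle x y μ, hd.dist_triangle x y ν,
      hd.dist_triangle ν y z, hd.dist_triangle μ y z, hd.dist_triangle x μ z,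
      hd.dist_triangle x ν z, hd₀ ν y, hd₀ y μ, hd₀ μ y, hd₀ y ν]

lemma GraphMetric.shortcutDist (hd : GraphMetric G w d) (ht : 0 < t)
    (hw : ∀ a b, G.Adj a b → w s(a, b) ≤ d a μ + t + d ν b) :
    GraphMetric G w (shortcutDist d μ ν t) := by
  have hd₀ := hd.dist_nonneg
  have hroutes : ∀ u v, 0 < d u μ + t + d ν v ∧ 0 < d u ν + t + d μ v := fun u v =>
    ⟨by linarith [hd₀ u μ, hd₀ ν v], by linarith [hd₀ u ν, hd₀ μ v]⟩
  refine ⟨fun u => ?_, fun u v huv => ?_, fun u v => ?_, hd.shortcutDist_triangle ht.le,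
    fun u v huv => ?_⟩
  · exact le_antisymm ((min_le_left _ _).trans (hd.dist_self u).le)
      (le_min (hd₀ u u) (le_min (hroutes u u).1.le (hroutes u u).2.le))
  · exact lt_min (hd.dist_pos huv) (lt_min (hroutes u v).1 (hroutes u v).2)
  · unfold _root_.shortcutDist
    rw [hd.dist_comm u v, hd.dist_comm u μ, hd.dist_comm u ν, hd.dist_comm ν v, hd.dist_comm μ v,
      min_comm (d μ u + t + d v ν)]
    congr 2 <;> ring
  · have hvu := hw v u huv.symm
    rw [Sym2.eq_swap, hd.dist_comm v μ, hd.dist_comm ν u] at hvu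
    refine le_antisymm ((min_le_left _ _).trans (hd.dist_eq_weight huv).le) ?_
    exact le_min (hd.dist_eq_weight huv).ge (le_min (hw u v huv) (by linarith))

end Shortcut

lemma exists_pos_lt_forall_le {ι : Type*} [Finite ι] {f : ι → ℝ} {c : ℝ} (hc : 0 < c)
    (hf : ∀ i, f i < c) : ∃ t, 0 < t ∧ t < c ∧ ∀ i, f i ≤ t := by
  rcases isEmpty_or_nonempty ι with _ | _
  · exact ⟨c / 2, by linarith, by linarith, fun i => isEmptyElim i⟩
  · obtain ⟨i₀, hi₀⟩ := Finite.exists_max f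
    exact ⟨max (c / 2) (f i₀), by positivity, max_lt (by linarith) (hf i₀),
      fun i => (hi₀ i).trans (le_max_right _ _)⟩

lemma GraphMetric.exists_adj_add_dist_le {V : Type*} [Finite V] {G : SimpleGraph V}
    {w : Sym2 V → ℝ} {d : V → V → ℝ} (hd : GraphMetric G w d) {μ ν : V} (hne : μ ≠ ν)
    (huniq : ∀ D, GraphMetric G w D → D μ ν = d μ ν) :
    ∃ a b, G.Adj a b ∧ d a μ + d μ ν + d ν b ≤ w s(a, b) := by
  by_contra! hlt
  obtain ⟨t, ht₀, htd, ht⟩ := exists_pos_lt_forall_le (hd.dist_pos hne)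
    (f := fun ab : {ab : V × V // G.Adj ab.1 ab.2} => w s(ab.1.1, ab.1.2) - d ab.1.1 μ - d ν ab.1.2)
    fun ab => by linarith [hlt _ _ ab.2]
  have hsc := hd.shortcutDist ht₀ (fun a b hab => by linarith [ht ⟨(a, b), hab⟩])
  have hμν : _root_.shortcutDist d μ ν t μ ν ≤ d μ μ + t + d ν ν :=
    (min_le_right _ _).trans (min_le_left _ _)
  rw [hd.dist_self, hd.dist_self, huniq _ hsc] at hμν
  linarith

namespace SimpleGraph

variable {V : Type*} [Finite V] {G : SimpleGraph V} {w : Sym2 V → ℝ} {x y : V}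

/-- Junk value `0` when `y` is not reachable from `x`. -/
noncomputable def pathMetric (G : SimpleGraph V) (w : Sym2 V → ℝ) (x y : V) : ℝ :=
  ⨅ p : G.Path x y, (p : G.Walk x y).weight w

lemma pathMetric_le_weight (hw : ∀ e ∈ G.edgeSet, 0 ≤ w e) (p : G.Walk x y) :
    G.pathMetric w x y ≤ p.weight w := by
  classical
  have := Fintype.ofFinite V
  exact (ciInf_le (Set.finite_range _).bddBelow ⟨p.bypass, p.bypass_isPath⟩).trans
    (p.weight_bypass_le hw)

lemma Reachable.exists_isPath_weight_eq_pathMetric (h : G.Reachable x y) :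
    ∃ p : G.Walk x y, p.IsPath ∧ p.weight w = G.pathMetric w x y := by
  classical
  have := Fintype.ofFinite V
  obtain ⟨p⟩ := h
  have : Nonempty (G.Path x y) := ⟨⟨p.bypass, p.bypass_isPath⟩⟩
  obtain ⟨q, hq⟩ :=
    exists_eq_ciInf_of_finite (f := fun q : G.Path x y => (q : G.Walk x y).weight w)
  exact ⟨q, q.2, hq⟩

lemma isPath_of_weight_le_pathMetric (hw : ∀ e ∈ G.edgeSet, 0 < w e) {p : G.Walk x y}
    (h : p.weight w ≤ G.pathMetric w x y) : p.IsPath := by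
  classical
  by_contra hp
  obtain ⟨q, hq⟩ := Walk.exists_weight_lt_of_not_isPath hw hp
  linarith [pathMetric_le_weight (fun e he => (hw e he).le) q]

lemma _root_.GraphMetric.le_pathMetric {D : V → V → ℝ} (hD : GraphMetric G w D)
    (h : G.Reachable x y) : D x y ≤ G.pathMetric w x y := by
  obtain ⟨p, -, hp⟩ := h.exists_isPath_weight_eq_pathMetric (w := w)
  exact hp ▸ hD.dist_le_weight p

lemma Connected.graphMetric_pathMetric (hconn : G.Connected) {D : V → V → ℝ}
    (hD : GraphMetric G w D) : GraphMetric G w (G.pathMetric w) := by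
  have hw : ∀ e ∈ G.edgeSet, 0 ≤ w e := fun e he => (hD.weight_pos he).le
  have hle_rev : ∀ u v, G.pathMetric w u v ≤ G.pathMetric w v u := fun u v => by
    obtain ⟨p, -, hp⟩ := (hconn v u).exists_isPath_weight_eq_pathMetric (w := w)
    simpa [hp] using pathMetric_le_weight hw p.reverse
  refine ⟨fun u => ?_, fun u v huv => ?_, fun u v => le_antisymm (hle_rev u v) (hle_rev v u),
    fun u v x => ?_, fun u v huv => ?_⟩
  · exact le_antisymm (by simpa using pathMetric_le_weight hw (Walk.nil : G.Walk u u))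
      (hD.dist_self u ▸ hD.le_pathMetric (hconn u u))
  · exact (hD.dist_pos huv).trans_le (hD.le_pathMetric (hconn u v))
  · obtain ⟨p, -, hp⟩ := (hconn u v).exists_isPath_weight_eq_pathMetric (w := w)
    obtain ⟨q, -, hq⟩ := (hconn v x).exists_isPath_weight_eq_pathMetric (w := w)
    simpa [Walk.weight_append, hp, hq] using pathMetric_le_weight hw (p.append q)
  · exact le_antisymm (by simpa using pathMetric_le_weight hw (Walk.cons huv Walk.nil))
      (hD.dist_eq_weight huv ▸ hD.le_pathMetric (hconn u v))

end SimpleGraph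

lemma GraphMetric.mk_notMem_edges_append {V : Type*} {G : SimpleGraph V} {w : Sym2 V → ℝ}
    {d : V → V → ℝ} (hd : GraphMetric G w d) {a b μ ν : V} (hne : μ ≠ ν) (hnadj : ¬G.Adj μ ν)
    {P : G.Walk a μ} {Q : G.Walk μ ν} {R : G.Walk ν b} (hP : P.weight w = d a μ)
    (hQ : Q.weight w = d μ ν) (hR : R.weight w = d ν b) (h : d a μ + d μ ν + d ν b = w s(a, b)) :
    s(a, b) ∉ (P.append (Q.append R)).edges := by
  have hw : ∀ e ∈ G.edgeSet, 0 ≤ w e := fun e he => (hd.weight_pos he).le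
  have hμν := hd.dist_pos hne
  have hd₀ := hd.dist_nonneg
  simp only [Walk.edges_append, List.mem_append, not_or]
  refine ⟨fun hmem => ?_, fun hmem => ?_, fun hmem => ?_⟩
  · linarith [Walk.le_weight_of_mem_edges hw hmem, hd₀ ν b]
  · have hQab := Walk.le_weight_of_mem_edges hw hmem
    obtain rfl : a = μ := hd.dist_eq_zero_iff.1 (by linarith [hd₀ a μ, hd₀ ν b])
    obtain rfl : ν = b := hd.dist_eq_zero_iff.1 (by linarith [hd₀ a a, hd₀ ν b])
    exact hnadj (G.mem_edgeSet.1 (Q.edges_subset_edgeSet hmem))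
  · linarith [Walk.le_weight_of_mem_edges hw hmem, hd₀ a μ]

lemma SimpleGraph.Connected.exists_isCycle_of_add_pathMetric_le {V : Type*} [Finite V]
    {G : SimpleGraph V} (hconn : G.Connected) {w : Sym2 V → ℝ} {D : V → V → ℝ}
    (hD : GraphMetric G w D) {a b μ ν : V} (hne : μ ≠ ν) (hnadj : ¬G.Adj μ ν) (hab : G.Adj a b)
    (hle : G.pathMetric w a μ + G.pathMetric w μ ν + G.pathMetric w ν b ≤ w s(a, b)) :
    ∃ W : G.Walk μ μ, W.IsCycle ∧ ν ∈ W.support ∧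
      ∃ e₀ ∈ W.edges, (∀ e ∈ W.edges, w e ≤ w e₀) ∧ W.weight w = 2 * w e₀ := by
  classical
  have hd := hconn.graphMetric_pathMetric hD
  have hw : ∀ e ∈ G.edgeSet, 0 ≤ w e := fun e he => (hD.weight_pos he).le
  have heq : G.pathMetric w a μ + G.pathMetric w μ ν + G.pathMetric w ν b = w s(a, b) :=
    le_antisymm hle <| by
      linarith [hd.dist_eq_weight hab, hd.dist_triangle a μ b, hd.dist_triangle μ ν b]
  obtain ⟨P, -, hP⟩ := (hconn a μ).exists_isPath_weight_eq_pathMetric (w := w)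
  obtain ⟨Q, -, hQ⟩ := (hconn μ ν).exists_isPath_weight_eq_pathMetric (w := w)
  obtain ⟨R, -, hR⟩ := (hconn ν b).exists_isPath_weight_eq_pathMetric (w := w)
  set W₀ := P.append (Q.append R)
  have hW₀ : W₀.weight w = w s(a, b) := by
    rw [Walk.weight_append, Walk.weight_append, hP, hQ, hR, ← heq, add_assoc]
  have hW₀_path : W₀.IsPath :=
    isPath_of_weight_le_pathMetric (fun _ => hD.weight_pos) (by rw [hW₀, hd.dist_eq_weight hab])
  set c := Walk.cons hab W₀.reverse
  have hc : c.IsCycle := (Walk.cons_isCycle_iff _ hab).2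
    ⟨hW₀_path.reverse, by
      rw [Walk.edges_reverse, List.mem_reverse]
      exact hd.mk_notMem_edges_append hne hnadj hP hQ hR heq⟩
  have hμ : μ ∈ c.support := by simp [c, W₀]
  have hν : ν ∈ c.support := by simp [c, W₀]
  have hedges := (c.rotate_edges μ hμ).perm
  refine ⟨c.rotate μ hμ, hc.rotate hμ, (c.mem_support_rotate_iff μ hμ).2 hν, s(a, b),
    hedges.mem_iff.2 (by simp [c]), fun e he => ?_, ?_⟩
  · rw [hedges.mem_iff] at he
    simp only [c, Walk.edges_cons, Walk.edges_reverse, List.mem_cons, List.mem_reverse] at he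
    rcases he with rfl | he
    · exact le_rfl
    · exact hW₀ ▸ Walk.le_weight_of_mem_edges hw he
  · rw [Walk.weight_rotate, Walk.weight_cons, Walk.weight_reverse, hW₀, two_mul]

theorem unique_distance_iff_exists_cycle_general {V : Type*} [Fintype V] (G : SimpleGraph V)
    (hconn : G.Connected) (w : Sym2 V → ℝ)
    (hmet : ∃ D, GraphMetric G w D)
    (μ ν : V) (hne : μ ≠ ν) (hnadj : ¬G.Adj μ ν) :
    (∀ D₁ D₂, GraphMetric G w D₁ → GraphMetric G w D₂ → D₁ μ ν = D₂ μ ν) ↔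
      ∃ W : G.Walk μ μ, W.IsCycle ∧ ν ∈ W.support ∧
        ∃ e₀ ∈ W.edges, (∀ e ∈ W.edges, w e ≤ w e₀) ∧
          (W.edges.map w).sum = 2 * w e₀ := by
  obtain ⟨D₀, hD₀⟩ := hmet
  constructor
  · intro huniq
    have hd := hconn.graphMetric_pathMetric hD₀
    obtain ⟨a, b, hab, hle⟩ := hd.exists_adj_add_dist_le hne fun D hD => huniq D _ hD hd
    exact hconn.exists_isCycle_of_add_pathMetric_le hD₀ hne hnadj hab hle
  · rintro ⟨W, -, hν, e₀, he₀, -, hW⟩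
    exact W.graphMetric_dist_unique_of_weight_eq_two_mul hν he₀ hW

/-- Lemma l2.2.20. For distinct non-adjacent vertices `μ, ν` of a
finite connected metrizable weighted graph, all metrics in `M(w)` agree on `(μ, ν)`
(i.e. `{μ,ν} ∈ E^{un}(G)`) iff there is a cycle `C ⊆ G` through `μ` and `ν` with
`Σ_{e∈E(C)} w(e) = 2 max_{e∈E(C)} w(e)`. -/
theorem unique_distance_iff_exists_cycle {V : Type*} [Fintype V] (G : SimpleGraph V)
    (hconn : G.Connected) (w : Sym2 V → ℝ) (hw : ∀ e ∈ G.edgeSet, 0 ≤ w e)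
    (hmet : ∃ D, GraphMetric G w D)
    (μ ν : V) (hne : μ ≠ ν) (hnadj : ¬G.Adj μ ν) :
    (∀ D₁ D₂, GraphMetric G w D₁ → GraphMetric G w D₂ → D₁ μ ν = D₂ μ ν) ↔
      ∃ W : G.Walk μ μ, W.IsCycle ∧ ν ∈ W.support ∧
        ∃ e₀ ∈ W.edges, (∀ e ∈ W.edges, w e ≤ w e₀) ∧
          (W.edges.map w).sum = 2 * w e₀ :=
  unique_distance_iff_exists_cycle_general G hconn w hmet μ ν hne hnadj
end

section
/- Let (Y,δ) be a finite nonempty metric space. Then the following are equivalent: (1) there exists y*∈Y such that δ(y*,x) ≠ δ(y*,z) whenever x and z are distinct points of Y; (2) there exist an unbounded metric space (X,d) and a scaling sequence r̃ such that (X,d) has exactly one pretangent space at infinity with respect to r̃, and this pretangent space is isometric to (Y,δ). -/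
open Filter Topology
open scoped Classical

/-- An unbounded metric space. -/
def UnboundedSpace (X : Type*) [MetricSpace X] : Prop :=
  ¬ Bornology.IsBounded (Set.univ : Set X)

/-- A scaling sequence: positive reals tending to infinity. -/
def ScalingSeq (r : ℕ → ℝ) : Prop :=
  (∀ n, 0 < r n) ∧ Filter.Tendsto r Filter.atTop Filter.atTop

/-- Two sequences are mutually stable w.r.t. `r` if `d(x_n, y_n)/r_n` has a finite limit. -/
def MutuallyStable {X : Type*} [MetricSpace X] (r : ℕ → ℝ) (x y : ℕ → X) : Prop :=
  ∃ L : ℝ, Filter.Tendsto (fun n => dist (x n) (y n) / r n) Filter.atTop (nhds L)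

/-- `Seq(X, r̃)`: sequences going to infinity such that `d(x_n, p)/r_n` has a finite limit. -/
def SeqInf {X : Type*} [MetricSpace X] (r : ℕ → ℝ) (p : X) : Set (ℕ → X) :=
  {x | Filter.Tendsto (fun n => dist (x n) p) Filter.atTop Filter.atTop ∧
    ∃ L : ℝ, Filter.Tendsto (fun n => dist (x n) p / r n) Filter.atTop (nhds L)}

/-- The relation `x̃ ≡ ỹ`, i.e. `d(x_n, y_n)/r_n → 0`. -/
def EquivSeq {X : Type*} [MetricSpace X] (r : ℕ → ℝ) (x y : ℕ → X) : Prop :=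
  Filter.Tendsto (fun n => dist (x n) (y n) / r n) Filter.atTop (nhds 0)

/-- The `≡`-equivalence class of `x` inside `Seq(X, r̃)`. -/
def classOf {X : Type*} [MetricSpace X] (r : ℕ → ℝ) (p : X) (x : ℕ → X) : Set (ℕ → X) :=
  {y | y ∈ SeqInf r p ∧ EquivSeq r x y}

/-- The vertex set of the cluster graph `G_{X, r̃}`: all `≡`-classes of `Seq(X, r̃)`. -/
def VertexSet {X : Type*} [MetricSpace X] (r : ℕ → ℝ) (p : X) : Set (Set (ℕ → X)) :=
  {v | ∃ x ∈ SeqInf r p, v = classOf r p x}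

/-- Adjacency in the cluster graph `G_{X, r̃}`: distinct classes whose representatives
are mutually stable. -/
def AdjacentCl {X : Type*} [MetricSpace X] (r : ℕ → ℝ) (p : X) (u v : Set (ℕ → X)) : Prop :=
  u ∈ VertexSet r p ∧ v ∈ VertexSet r p ∧ u ≠ v ∧
    ∀ x ∈ u, ∀ y ∈ v, MutuallyStable r x y

/-- The weight `ρ_X` on the cluster graph: for an edge `{u,v}` it is the (unique) limit
`lim d(x_n, y_n)/r_n` for representatives. -/
noncomputable def rhoX {X : Type*} [MetricSpace X] (r : ℕ → ℝ) (u v : Set (ℕ → X)) : ℝ :=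
  sSup {L : ℝ | ∃ x ∈ u, ∃ y ∈ v,
    Filter.Tendsto (fun n => dist (x n) (y n) / r n) Filter.atTop (nhds L)}

/-- The root `ν₀ = X̃⁰_{∞,r̃}`: sequences with `d(z_n,p) → ∞` and `d(z_n,p)/r_n → 0`. -/
def rootClass {X : Type*} [MetricSpace X] (r : ℕ → ℝ) (p : X) : Set (ℕ → X) :=
  {z | Filter.Tendsto (fun n => dist (z n) p) Filter.atTop Filter.atTop ∧
    Filter.Tendsto (fun n => dist (z n) p / r n) Filter.atTop (nhds 0)}

/-- The labeling `ρ⁰` of vertices: `ρ⁰(v) = lim d(x_n,p)/r_n` for `x̃ ∈ v`. -/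
noncomputable def rho0 {X : Type*} [MetricSpace X] (r : ℕ → ℝ) (p : X)
    (v : Set (ℕ → X)) : ℝ :=
  sSup {L : ℝ | ∃ x ∈ v, Filter.Tendsto (fun n => dist (x n) p / r n) Filter.atTop (nhds L)}

/-- A self-stable family: a subset of `Seq(X, r̃)` any two of whose members are
mutually stable. -/
def SelfStable {X : Type*} [MetricSpace X] (r : ℕ → ℝ) (p : X) (F : Set (ℕ → X)) : Prop :=
  F ⊆ SeqInf r p ∧ ∀ x ∈ F, ∀ y ∈ F, MutuallyStable r x y

/-- A maximal self-stable set `X̃_{∞, r̃}`. -/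
def MaxSelfStable {X : Type*} [MetricSpace X] (r : ℕ → ℝ) (p : X) (F : Set (ℕ → X)) : Prop :=
  SelfStable r p F ∧ ∀ F', SelfStable r p F' → F ⊆ F' → F = F'

/-- The pretangent space `Ω^X_{∞,r̃}` attached to a maximal self-stable set `F`:
the set of `≡`-classes of members of `F`. -/
def PretangentCl {X : Type*} [MetricSpace X] (r : ℕ → ℝ) (F : Set (ℕ → X)) :
    Set (Set (ℕ → X)) :=
  {v | ∃ x ∈ F, v = {y | y ∈ F ∧ EquivSeq r x y}}

/-- A clique in the cluster graph `G_{X, r̃}`. -/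
def IsCliqueCl {X : Type*} [MetricSpace X] (r : ℕ → ℝ) (p : X)
    (C : Set (Set (ℕ → X))) : Prop :=
  C ⊆ VertexSet r p ∧ ∀ u ∈ C, ∀ v ∈ C, u ≠ v → AdjacentCl r p u v

/-
(1 ⇒ 2) Let `X ⊆ ℝ × ℓ^∞` be the union of copies of `Y`, the `n`-th one scaled by `sₙ = (2n+2)!`
and hung by `y₀` at height `hₙ = (2n+1)!` on the axis, with base point `p = y₀` in copy `0`.
Since `hₙ, sₙ₋₁ ≪ sₙ ≪ hₙ₊₁`, a sequence with `d(xₙ, p)/sₙ → L > 0` eventually lies in the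
`n`-th copy, at the image of a point of `Y` at distance about `L` from `y₀`; as distances from `y₀`
are distinct, it is eventually the image of a single `y ∈ Y`. So each member of `Seq(X, s̃)` is
equivalent to one of the sequences `n ↦ (image of y in copy n)`, whose mutual distances are
`sₙ δ(a, b)`. Hence `Seq(X, s̃)` is itself self-stable, it is the only maximal self-stable set,
and its classes form a copy of `Y`.

(2 ⇒ 1) Each member of `Seq(X, r̃)` lies in some maximal self-stable set, so uniqueness forces
`Seq(X, r̃)` to be self-stable. Unboundedness gives a sequence `z` with `d(zₙ, p) → ∞` but
`d(zₙ, p)/rₙ → 0`; let `y₀` correspond to its class. Then `δ(y₀, y) = lim d(xₙ, p)/rₙ` for `x` in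
the class of `y`, and two classes with the same limit must coincide: interleaving representatives
of both gives a member of `Seq(X, r̃)` whose distance to one of them oscillates.
-/

theorem Finite.exists_eventually_eq_of_tendsto {α β ι : Type*} [Finite α] [TopologicalSpace β]
    [T1Space β] {l : Filter ι} [l.NeBot] {f : α → β} (hf : Function.Injective f) {u : ι → α}
    {b : β} (h : Tendsto (f ∘ u) l (𝓝 b)) : ∃ a, ∀ᶠ i in l, u i = a := by
  have hfin := Set.toFinite (Set.range f)
  obtain ⟨a, rfl⟩ : b ∈ Set.range f :=
    hfin.isClosed.mem_of_tendsto h (Eventually.of_forall fun i => ⟨u i, rfl⟩)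
  have hnhds : (Set.range f \ {f a})ᶜ ∈ 𝓝 (f a) :=
    hfin.sdiff.isClosed.compl_mem_nhds fun h => h.2 rfl
  refine ⟨a, (h.eventually_mem hnhds).mono fun i hi => hf ?_⟩
  by_contra hne
  exact hi ⟨⟨u i, rfl⟩, hne⟩

section Pretangent

variable {X : Type*} [MetricSpace X] {r : ℕ → ℝ} {p : X} {x x' y y' z : ℕ → X} {L : ℝ}

theorem equivSeq_refl (x : ℕ → X) : EquivSeq r x x := by
  simp [EquivSeq]

theorem EquivSeq.symm (h : EquivSeq r x y) : EquivSeq r y x := by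
  simpa only [EquivSeq, dist_comm] using h

theorem equivSeq_of_eventuallyEq (h : ∀ᶠ n in atTop, x n = y n) : EquivSeq r x y :=
  tendsto_const_nhds.congr' (h.mono fun n hn => by simp [hn])

theorem EquivSeq.tendsto_dist_div_left (hr : ∀ n, 0 < r n) (hx : EquivSeq r x x')
    (h : Tendsto (fun n => dist (x n) (y n) / r n) atTop (𝓝 L)) :
    Tendsto (fun n => dist (x' n) (y n) / r n) atTop (𝓝 L) := by
  have hdiff : Tendsto (fun n => dist (x' n) (y n) / r n - dist (x n) (y n) / r n)
      atTop (𝓝 0) := by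
    refine squeeze_zero_norm (fun n => ?_) hx
    rw [← sub_div, Real.norm_eq_abs, abs_div, abs_of_pos (hr n), dist_comm (x n) (x' n)]
    exact div_le_div_of_nonneg_right (abs_dist_sub_le _ _ _) (hr n).le
  simpa using hdiff.add h

theorem EquivSeq.tendsto_dist_div (hr : ∀ n, 0 < r n) (hx : EquivSeq r x x')
    (hy : EquivSeq r y y') (h : Tendsto (fun n => dist (x n) (y n) / r n) atTop (𝓝 L)) :
    Tendsto (fun n => dist (x' n) (y' n) / r n) atTop (𝓝 L) := by
  have h' := hx.tendsto_dist_div_left hr h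
  simp only [dist_comm (x' _)] at h' ⊢
  exact hy.tendsto_dist_div_left hr h'

theorem EquivSeq.trans (hr : ∀ n, 0 < r n) (hxy : EquivSeq r x y) (hyz : EquivSeq r y z) :
    EquivSeq r x z :=
  hxy.symm.tendsto_dist_div_left hr hyz

theorem tendsto_dist_div_of_tendsto_dist_base_div_zero (hr : ∀ n, 0 < r n)
    (hx : Tendsto (fun n => dist (x n) p / r n) atTop (𝓝 0))
    (hy : Tendsto (fun n => dist (y n) p / r n) atTop (𝓝 L)) :
    Tendsto (fun n => dist (x n) (y n) / r n) atTop (𝓝 L) := by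
  have hpx : EquivSeq r (fun _ => p) x := by simpa only [EquivSeq, dist_comm p] using hx
  exact hpx.tendsto_dist_div_left hr (by simpa only [dist_comm p] using hy)

theorem mem_classOf_self (hx : x ∈ SeqInf r p) : x ∈ classOf r p x :=
  ⟨hx, equivSeq_refl x⟩

theorem classOf_eq_classOf_iff (hr : ∀ n, 0 < r n) (hy : y ∈ SeqInf r p) :
    classOf r p x = classOf r p y ↔ EquivSeq r x y := by
  refine ⟨fun h => ?_, fun h => ?_⟩
  · have hy' : y ∈ classOf r p x := by rw [h]; exact mem_classOf_self hy
    exact hy'.2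
  · ext w
    exact and_congr_right fun _ => ⟨h.symm.trans hr, h.trans hr⟩

theorem rhoX_classOf (hr : ∀ n, 0 < r n) (hx : x ∈ SeqInf r p) (hy : y ∈ SeqInf r p)
    (h : Tendsto (fun n => dist (x n) (y n) / r n) atTop (𝓝 L)) :
    rhoX r (classOf r p x) (classOf r p y) = L := by
  refine (congrArg sSup ?_).trans (csSup_singleton L)
  ext L'
  refine ⟨?_, ?_⟩
  · rintro ⟨x', hx', y', hy', hL'⟩
    exact tendsto_nhds_unique hL' (hx'.2.tendsto_dist_div hr hy'.2 h)
  · rintro rfl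
    exact ⟨x, mem_classOf_self hx, y, mem_classOf_self hy, h⟩

theorem pretangentCl_seqInf : PretangentCl r (SeqInf r p) = VertexSet r p := rfl

theorem sUnion_pretangentCl (F : Set (ℕ → X)) : ⋃₀ PretangentCl r F = F := by
  refine subset_antisymm ?_ fun w hw => ⟨_, ⟨w, hw, rfl⟩, hw, equivSeq_refl w⟩
  rintro w ⟨_, ⟨_, _, rfl⟩, hw⟩
  exact hw.1

theorem pretangentCl_injective : Function.Injective (PretangentCl (X := X) r) :=
  fun F₁ F₂ h => by rw [← sUnion_pretangentCl (r := r) F₁, h, sUnion_pretangentCl]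

theorem selfStable_singleton (hx : x ∈ SeqInf r p) : SelfStable r p {x} := by
  refine ⟨Set.singleton_subset_iff.2 hx, ?_⟩
  rintro _ rfl _ rfl
  exact ⟨0, equivSeq_refl _⟩

theorem exists_maxSelfStable_superset {G : Set (ℕ → X)} (hG : SelfStable r p G) :
    ∃ F, G ⊆ F ∧ MaxSelfStable r p F := by
  have hchain : ∀ c ⊆ {F | SelfStable r p F}, IsChain (· ⊆ ·) c → c.Nonempty →
      ∃ ub ∈ {F | SelfStable r p F}, ∀ s ∈ c, s ⊆ ub := by
    intro c hc hchain _
    refine ⟨⋃₀ c, ⟨Set.sUnion_subset fun s hs => (hc hs).1, ?_⟩,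
      fun s hs => Set.subset_sUnion_of_mem hs⟩
    rintro x ⟨s, hs, hxs⟩ y ⟨t, ht, hyt⟩
    rcases hchain.total hs ht with hst | hts
    · exact (hc ht).2 x (hst hxs) y hyt
    · exact (hc hs).2 x hxs y (hts hyt)
  obtain ⟨F, hGF, hF⟩ := zorn_subset_nonempty {F | SelfStable r p F} hchain G hG
  exact ⟨F, hGF, hF.prop, fun F' hF' hFF' => hFF'.antisymm (hF.le_of_ge hF' hFF')⟩

theorem maxSelfStable_iff_eq_seqInf (hS : SelfStable r p (SeqInf r p)) {F : Set (ℕ → X)} :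
    MaxSelfStable r p F ↔ F = SeqInf r p := by
  refine ⟨fun hF => hF.2 _ hS hF.1.1, ?_⟩
  rintro rfl
  exact ⟨hS, fun F' hF' hsub => hsub.antisymm hF'.1⟩

theorem eq_seqInf_of_pretangentCl_eq
    (huniq : ∀ F₁ F₂ : Set (ℕ → X), MaxSelfStable r p F₁ → MaxSelfStable r p F₂ →
      PretangentCl r F₁ = PretangentCl r F₂)
    {F : Set (ℕ → X)} (hF : MaxSelfStable r p F) : F = SeqInf r p := by
  refine hF.1.1.antisymm fun x hx => ?_
  obtain ⟨F', hxF', hF'⟩ := exists_maxSelfStable_superset (selfStable_singleton hx)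
  rw [pretangentCl_injective (huniq F F' hF hF')]
  exact hxF' rfl

theorem selfStable_seqInf_of_forall_equivSeq {ι : Type*} (hr : ∀ n, 0 < r n) (s : ι → ℕ → X)
    (hs : ∀ i j, MutuallyStable r (s i) (s j))
    (hcover : ∀ x ∈ SeqInf r p, ∃ i, EquivSeq r (s i) x) :
    SelfStable r p (SeqInf r p) := by
  refine ⟨subset_rfl, fun x hx y hy => ?_⟩
  obtain ⟨i, hi⟩ := hcover x hx
  obtain ⟨j, hj⟩ := hcover y hy
  obtain ⟨L, hL⟩ := hs i j
  exact ⟨L, hi.tendsto_dist_div hr hj hL⟩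

theorem exists_isometry_vertexSet_of_forall_equivSeq {Y : Type*} [MetricSpace Y]
    (hr : ∀ n, 0 < r n) (s : Y → ℕ → X) (hs : ∀ y, s y ∈ SeqInf r p)
    (hdist : ∀ a b, Tendsto (fun n => dist (s a n) (s b n) / r n) atTop (𝓝 (dist a b)))
    (hcover : ∀ x ∈ SeqInf r p, ∃ y, EquivSeq r (s y) x) :
    ∃ g : Y → Set (ℕ → X), Function.Injective g ∧ (∀ y, g y ∈ VertexSet r p) ∧
      (∀ v ∈ VertexSet r p, ∃ y, g y = v) ∧ ∀ a b, rhoX r (g a) (g b) = dist a b := by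
  refine ⟨fun y => classOf r p (s y), fun a b hab => ?_, fun y => ⟨s y, hs y, rfl⟩, ?_,
    fun a b => rhoX_classOf hr (hs a) (hs b) (hdist a b)⟩
  · have hab' : EquivSeq r (s a) (s b) := (classOf_eq_classOf_iff hr (hs b)).1 hab
    exact dist_eq_zero.1 (tendsto_nhds_unique (hdist a b) hab')
  · rintro v ⟨x, hx, rfl⟩
    obtain ⟨y, hy⟩ := hcover x hx
    exact ⟨y, (classOf_eq_classOf_iff hr hx).2 hy⟩

theorem equivSeq_of_tendsto_dist_base_div_eq (hS : SelfStable r p (SeqInf r p))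
    (hx : x ∈ SeqInf r p) (hy : y ∈ SeqInf r p)
    (hxL : Tendsto (fun n => dist (x n) p / r n) atTop (𝓝 L))
    (hyL : Tendsto (fun n => dist (y n) p / r n) atTop (𝓝 L)) : EquivSeq r x y := by
  let w : ℕ → X := fun n => if Even n then x n else y n
  have hw : w ∈ SeqInf r p := by
    refine ⟨?_, L, ?_⟩
    · have := (hx.1.mono_left inf_le_left).if (p := Even) (hy.1.mono_left inf_le_left)
      exact this.congr fun n => by by_cases hn : Even n <;> simp [w, hn]
    · have := (hxL.mono_left inf_le_left).if (p := Even) (hyL.mono_left inf_le_left)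
      exact this.congr fun n => by by_cases hn : Even n <;> simp [w, hn]
  obtain ⟨M, hM⟩ := hS.2 x hx w hw
  obtain ⟨ρ, hρ⟩ := hS.2 x hx y hy
  have heven : Tendsto (fun k : ℕ => 2 * k) atTop atTop :=
    tendsto_atTop_mono (fun k => show k ≤ _ by omega) tendsto_id
  have hodd : Tendsto (fun k : ℕ => 2 * k + 1) atTop atTop :=
    tendsto_atTop_mono (fun k => show k ≤ _ by omega) tendsto_id
  have hM0 : M = 0 :=
    tendsto_nhds_unique (hM.comp heven) (tendsto_const_nhds.congr fun k => by simp [w])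
  have hρM : ρ = M :=
    tendsto_nhds_unique (hρ.comp hodd) ((hM.comp hodd).congr fun k => by simp [w])
  rwa [hρM, hM0] at hρ

theorem exists_mem_rootClass (hX : UnboundedSpace X) (hr : Tendsto r atTop atTop) :
    ∃ z, z ∈ rootClass r p := by
  have hfar : ∀ n : ℕ, ∃ x : X, (n : ℝ) < dist x p := fun n => by
    by_contra! h
    exact hX ((Metric.isBounded_iff_subset_closedBall p).2 ⟨n, fun x _ => h x⟩)
  choose x hx using hfar
  have hxp : Tendsto (fun j => dist (x j) p) atTop atTop :=
    tendsto_atTop_mono (fun j => (hx j).le) tendsto_natCast_atTop_atTop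
  have hsqrt : Tendsto (fun n => √(r n)) atTop atTop := Real.tendsto_sqrt_atTop.comp hr
  -- slow `x` down so that it stays within `√(r n)` of `p`
  let m : ℕ → ℕ := fun n => Nat.findGreatest (fun j => dist (x j) p ≤ √(r n)) n
  have hm : Tendsto m atTop atTop := tendsto_atTop.2 fun J => by
    filter_upwards [eventually_ge_atTop J, hsqrt.eventually_ge_atTop (dist (x J) p)]
      with n hJn hJ
    exact Nat.le_findGreatest hJn hJ
  have hmr : ∀ᶠ n in atTop, dist (x (m n)) p ≤ √(r n) := by
    filter_upwards [hsqrt.eventually_ge_atTop (dist (x 0) p)] with n h0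
    exact Nat.findGreatest_spec (P := fun j => dist (x j) p ≤ √(r n)) (Nat.zero_le n) h0
  refine ⟨fun n => x (m n), hxp.comp hm, ?_⟩
  have hinv : Tendsto (fun n => 1 / √(r n)) atTop (𝓝 0) := by
    simpa [one_div, Function.comp_def] using tendsto_inv_atTop_zero.comp hsqrt
  refine squeeze_zero' ?_ ?_ hinv
  · filter_upwards [hr.eventually_gt_atTop 0] with n hn using div_nonneg dist_nonneg hn.le
  · filter_upwards [hmr, hr.eventually_gt_atTop 0] with n hn hrn
    rw [← Real.sqrt_div_self']
    exact div_le_div_of_nonneg_right hn hrn.le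

theorem exists_dist_injective_of_isometry_vertexSet {Y : Type*} [MetricSpace Y]
    (hX : UnboundedSpace X) (hr : ScalingSeq r) (hS : SelfStable r p (SeqInf r p))
    (g : Y → Set (ℕ → X)) (hg : Function.Injective g) (hmem : ∀ y, g y ∈ VertexSet r p)
    (hsurj : ∀ v ∈ VertexSet r p, ∃ y, g y = v) (hρ : ∀ a b, rhoX r (g a) (g b) = dist a b) :
    ∃ y₀ : Y, ∀ a b : Y, a ≠ b → dist y₀ a ≠ dist y₀ b := by
  obtain ⟨z, hz, hz0⟩ := exists_mem_rootClass (p := p) hX hr.2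
  have hzS : z ∈ SeqInf r p := ⟨hz, 0, hz0⟩
  obtain ⟨y₀, hy₀⟩ := hsurj _ ⟨z, hzS, rfl⟩
  choose x hxS hgx using hmem
  choose ℓ hℓ using fun y => (hxS y).2
  have hdist : ∀ y, dist y₀ y = ℓ y := fun y => by
    rw [← hρ, hy₀, hgx]
    exact rhoX_classOf hr.1 hzS (hxS y)
      (tendsto_dist_div_of_tendsto_dist_base_div_zero hr.1 hz0 (hℓ y))
  refine ⟨y₀, fun a b hab hab' => hab (hg ?_)⟩
  rw [hgx, hgx, classOf_eq_classOf_iff hr.1 (hxS b)]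
  rw [hdist, hdist] at hab'
  exact equivSeq_of_tendsto_dist_base_div_eq hS (hxS a) (hxS b) (hℓ a) (hab' ▸ hℓ b)

end Pretangent

namespace Hanging

-- Consecutive factorials serve alternately as heights and scales; what matters is that the
-- ratio of consecutive terms tends to infinity.
noncomputable def height (n : ℕ) : ℝ := (2 * n + 1).factorial

noncomputable def scale (n : ℕ) : ℝ := (2 * n + 2).factorial

theorem height_zero : height 0 = 1 := by simp [height]

theorem one_le_height (n : ℕ) : 1 ≤ height n := by
  simpa [height] using Nat.one_le_iff_ne_zero.2 (Nat.factorial_ne_zero (2 * n + 1))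

theorem height_pos (n : ℕ) : 0 < height n := one_pos.trans_le (one_le_height n)

theorem scale_eq (n : ℕ) : scale n = (2 * n + 2) * height n := by
  rw [scale, height, show 2 * n + 2 = 2 * n + 1 + 1 by ring, Nat.factorial_succ]
  push_cast
  ring

theorem height_le_scale (n : ℕ) : height n ≤ scale n := by
  rw [scale_eq]
  nlinarith [one_le_height n, (Nat.cast_nonneg n : (0 : ℝ) ≤ n)]

theorem scale_pos (n : ℕ) : 0 < scale n :=
  (height_pos n).trans_le (height_le_scale n)

theorem scale_le_height_of_lt {k n : ℕ} (h : k < n) : scale k ≤ height n := by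
  unfold scale height
  exact_mod_cast Nat.factorial_le (by omega)

theorem mul_scale_le_height_of_lt {n k : ℕ} (h : n < k) : (2 * n + 3) * scale n ≤ height k := by
  have hle : ((2 * n + 3).factorial : ℝ) ≤ height k := by
    unfold height
    exact_mod_cast Nat.factorial_le (by omega)
  rw [show 2 * n + 3 = 2 * n + 2 + 1 by ring, Nat.factorial_succ] at hle
  push_cast at hle
  rw [scale]
  linarith

theorem tendsto_height : Tendsto height atTop atTop := by
  refine tendsto_atTop_mono (fun n => ?_) tendsto_natCast_atTop_atTop
  unfold height
  exact_mod_cast (Nat.self_le_factorial _).trans' (by omega)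

theorem tendsto_height_div_scale : Tendsto (fun n => height n / scale n) atTop (𝓝 0) := by
  refine squeeze_zero (fun n => div_nonneg (height_pos n).le (scale_pos n).le) (fun n => ?_)
    tendsto_one_div_add_atTop_nhds_zero_nat
  rw [scale_eq, div_mul_cancel_right₀ (height_pos n).ne', one_div]
  exact inv_anti₀ (by positivity) (by linarith)

theorem scalingSeq_scale : ScalingSeq scale :=
  ⟨scale_pos, tendsto_atTop_mono height_le_scale tendsto_height⟩

end Hanging

section HangingSpace

open scoped lp ENNReal

variable {Y : Type*} [MetricSpace Y] [TopologicalSpace.SeparableSpace Y]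

noncomputable def Hanging.embed (y₀ : Y) (q : Y × ℕ) : ℝ × ℓ^∞(ℕ, ℝ) :=
  (Hanging.height q.2, Hanging.scale q.2 • (kuratowskiEmbedding Y q.1 - kuratowskiEmbedding Y y₀))

def Hanging (y₀ : Y) : Set (ℝ × ℓ^∞(ℕ, ℝ)) := Set.range (Hanging.embed y₀)

namespace Hanging

variable (y₀ : Y)

noncomputable def point (q : Y × ℕ) : Hanging y₀ := ⟨embed y₀ q, q, rfl⟩

noncomputable def base : Hanging y₀ := point y₀ (y₀, 0)

noncomputable def seq (y : Y) (n : ℕ) : Hanging y₀ := point y₀ (y, n)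

theorem exists_point_eq (x : Hanging y₀) : ∃ q, point y₀ q = x := by
  obtain ⟨_, q, rfl⟩ := x
  exact ⟨q, rfl⟩

theorem dist_point_point (a b : Y) (n : ℕ) :
    dist (point y₀ (a, n)) (point y₀ (b, n)) = scale n * dist a b := by
  simp only [Subtype.dist_eq, point, embed]
  rw [Prod.dist_eq, dist_self, dist_eq_norm,
    ← smul_sub, sub_sub_sub_cancel_right, norm_smul, ← dist_eq_norm,
    (kuratowskiEmbedding.isometry Y).dist_eq, Real.norm_of_nonneg (scale_pos n).le]
  exact max_eq_right (by have := scale_pos n; positivity)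

theorem dist_point_base (q : Y × ℕ) :
    dist (point y₀ q) (base y₀) = max (height q.2 - 1) (scale q.2 * dist y₀ q.1) := by
  simp only [Subtype.dist_eq, base, point, embed]
  rw [Prod.dist_eq, sub_self, smul_zero,
    dist_zero_right, norm_smul, ← dist_eq_norm, (kuratowskiEmbedding.isometry Y).dist_eq,
    Real.norm_of_nonneg (scale_pos q.2).le, height_zero, Real.dist_eq,
    abs_of_nonneg (by linarith [one_le_height q.2]), dist_comm]

theorem dist_point_base_le_of_lt (q : Y × ℕ) {n : ℕ} (h : q.2 < n) :
    dist (point y₀ q) (base y₀) ≤ (1 + dist y₀ q.1) * height n := by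
  have hkn := scale_le_height_of_lt h
  have hδ : 0 ≤ dist y₀ q.1 := dist_nonneg
  rw [dist_point_base]
  refine max_le ?_ ?_
  · nlinarith [height_le_scale q.2, height_pos n]
  · nlinarith [scale_pos q.2]

theorem mul_scale_le_dist_point_base_of_lt (q : Y × ℕ) {n : ℕ} (h : n < q.2) :
    (2 * n + 2) * scale n ≤ dist (point y₀ q) (base y₀) := by
  rw [dist_point_base]
  refine le_max_of_le_left ?_
  nlinarith [mul_scale_le_height_of_lt h, one_le_height n, height_le_scale n]

theorem dist_le_dist_point_base_div (q : Y × ℕ) :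
    dist y₀ q.1 ≤ dist (point y₀ q) (base y₀) / scale q.2 := by
  rw [le_div_iff₀ (scale_pos q.2), dist_point_base, mul_comm]
  exact le_max_right _ _

theorem dist_point_base_div_le (q : Y × ℕ) :
    dist (point y₀ q) (base y₀) / scale q.2 ≤ dist y₀ q.1 + height q.2 / scale q.2 := by
  rw [div_le_iff₀ (scale_pos q.2), add_mul, div_mul_cancel₀ _ (scale_pos q.2).ne',
    dist_point_base]
  exact max_le (by linarith [mul_nonneg (dist_nonneg (x := y₀) (y := q.1)) (scale_pos q.2).le])
    (by linarith [height_pos q.2])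

theorem tendsto_dist_seq_base (y : Y) :
    Tendsto (fun n => dist (seq y₀ y n) (base y₀) / scale n) atTop (𝓝 (dist y₀ y)) := by
  refine tendsto_of_tendsto_of_tendsto_of_le_of_le tendsto_const_nhds ?_
    (fun n => dist_le_dist_point_base_div y₀ (y, n)) (fun n => dist_point_base_div_le y₀ (y, n))
  simpa using tendsto_height_div_scale.const_add (dist y₀ y)

theorem seq_mem_seqInf (y : Y) : seq y₀ y ∈ SeqInf scale (base y₀) := by
  refine ⟨tendsto_atTop_mono (fun n => ?_) (tendsto_atTop_add_const_right _ (-1) tendsto_height),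
    _, tendsto_dist_seq_base y₀ y⟩
  rw [seq, dist_point_base, ← sub_eq_add_neg]
  exact le_max_left _ _

theorem tendsto_dist_seq_seq (a b : Y) :
    Tendsto (fun n => dist (seq y₀ a n) (seq y₀ b n) / scale n) atTop (𝓝 (dist a b)) :=
  tendsto_const_nhds.congr fun n => by
    rw [seq, seq, dist_point_point, mul_div_cancel_left₀ _ (scale_pos n).ne']

theorem unboundedSpace : UnboundedSpace (Hanging y₀) := by
  intro hb
  obtain ⟨C, hC⟩ := (Metric.isBounded_iff_subset_closedBall (base y₀)).1 hb
  obtain ⟨n, hn⟩ := (tendsto_height.eventually_gt_atTop (C + 1)).exists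
  have hle : dist (point y₀ (y₀, n)) (base y₀) ≤ C := hC (Set.mem_univ _)
  rw [dist_point_base] at hle
  linarith [le_max_left (height n - 1) (scale n * dist y₀ y₀)]

variable [Finite Y]

theorem eventually_snd_eq {q : ℕ → Y × ℕ} {L : ℝ} (hL : 0 < L)
    (h : Tendsto (fun n => dist (point y₀ (q n)) (base y₀) / scale n) atTop (𝓝 L)) :
    ∀ᶠ n in atTop, (q n).2 = n := by
  obtain ⟨D, hD⟩ := Finite.exists_le fun a : Y => dist y₀ a
  have hsmall : Tendsto (fun n => (1 + D) * (height n / scale n)) atTop (𝓝 0) := by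
    simpa using tendsto_height_div_scale.const_mul (1 + D)
  filter_upwards [h.eventually (gt_mem_nhds (lt_add_one L)),
    h.eventually (lt_mem_nhds (half_lt_self hL)), hsmall.eventually (gt_mem_nhds (half_pos hL)),
    tendsto_natCast_atTop_atTop.eventually_gt_atTop L] with n hup hlow hsm hn
  rcases lt_trichotomy (q n).2 n with hkn | heq | hnk
  · have hle := div_le_div_of_nonneg_right (dist_point_base_le_of_lt y₀ (q n) hkn)
      (scale_pos n).le
    have := mul_le_mul_of_nonneg_right (add_le_add_left (hD (q n).1) 1)
      (div_nonneg (height_pos n).le (scale_pos n).le)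
    rw [mul_div_assoc] at hle
    linarith
  · exact heq
  · have hge := mul_scale_le_dist_point_base_of_lt y₀ (q n) hnk
    rw [← le_div_iff₀ (scale_pos n)] at hge
    linarith

theorem exists_eventually_eq_seq (hy₀ : Function.Injective (dist y₀)) {x : ℕ → Hanging y₀}
    {L : ℝ} (hL : 0 < L) (h : Tendsto (fun n => dist (x n) (base y₀) / scale n) atTop (𝓝 L)) :
    ∃ y, ∀ᶠ n in atTop, x n = seq y₀ y n := by
  choose q hq using fun n => exists_point_eq y₀ (x n)
  simp only [← hq] at h
  have hlevel := eventually_snd_eq y₀ hL h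
  have hlabel : Tendsto (dist y₀ ∘ fun n => (q n).1) atTop (𝓝 L) := by
    have hlow := h.sub tendsto_height_div_scale
    rw [sub_zero] at hlow
    refine tendsto_of_tendsto_of_tendsto_of_le_of_le' hlow h ?_ ?_ <;>
      filter_upwards [hlevel] with n hn
    · have := dist_point_base_div_le y₀ (q n)
      rw [hn] at this
      simp only [Function.comp_apply]
      linarith
    · simpa [hn] using dist_le_dist_point_base_div y₀ (q n)
  obtain ⟨y, hy⟩ := Finite.exists_eventually_eq_of_tendsto hy₀ hlabel
  refine ⟨y, ?_⟩
  filter_upwards [hlevel, hy] with n hn hyn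
  rw [← hq, seq, show q n = (y, n) from Prod.ext hyn hn]

theorem exists_equivSeq_seq (hy₀ : Function.Injective (dist y₀)) {x : ℕ → Hanging y₀}
    (hx : x ∈ SeqInf scale (base y₀)) : ∃ y, EquivSeq scale (seq y₀ y) x := by
  obtain ⟨L, hL⟩ := hx.2
  rcases (ge_of_tendsto' hL fun n => div_nonneg dist_nonneg (scale_pos n).le).eq_or_lt with
    rfl | hpos
  · refine ⟨y₀, tendsto_dist_div_of_tendsto_dist_base_div_zero scale_pos ?_ hL⟩
    simpa using tendsto_dist_seq_base y₀ y₀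
  · obtain ⟨y, hy⟩ := exists_eventually_eq_seq y₀ hy₀ hpos hL
    exact ⟨y, equivSeq_of_eventuallyEq (hy.mono fun n hn => hn.symm)⟩

end Hanging

end HangingSpace

theorem finite_space_unique_pretangent_iff_general {Y : Type*} [MetricSpace Y] [Fintype Y] :
    (∃ y₀ : Y, ∀ x z : Y, x ≠ z → dist y₀ x ≠ dist y₀ z) ↔
    (∃ (X : Type) (_ : MetricSpace X), UnboundedSpace X ∧
      ∃ r : ℕ → ℝ, ScalingSeq r ∧ ∃ p : X,
        (∃ F : Set (ℕ → X), MaxSelfStable r p F) ∧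
        (∀ F₁ F₂ : Set (ℕ → X), MaxSelfStable r p F₁ → MaxSelfStable r p F₂ →
          PretangentCl r F₁ = PretangentCl r F₂) ∧
        (∀ F : Set (ℕ → X), MaxSelfStable r p F →
          ∃ g : Y → Set (ℕ → X),
            Function.Injective g ∧ (∀ y, g y ∈ PretangentCl r F) ∧
            (∀ v ∈ PretangentCl r F, ∃ y, g y = v) ∧
            ∀ y₁ y₂ : Y, rhoX r (g y₁) (g y₂) = dist y₁ y₂)) := by
  constructor
  · rintro ⟨y₀, hy₀⟩
    have hcover : ∀ x ∈ SeqInf Hanging.scale (Hanging.base y₀), ∃ y, EquivSeq _ _ x :=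
      fun x hx => Hanging.exists_equivSeq_seq y₀ (fun a b => not_imp_not.1 (hy₀ a b)) hx
    have hS := selfStable_seqInf_of_forall_equivSeq Hanging.scale_pos _
      (fun a b => ⟨_, Hanging.tendsto_dist_seq_seq y₀ a b⟩) hcover
    have hmax := fun F => maxSelfStable_iff_eq_seqInf (F := F) hS
    refine ⟨Hanging y₀, inferInstance, Hanging.unboundedSpace y₀, Hanging.scale,
      Hanging.scalingSeq_scale, Hanging.base y₀, ⟨_, (hmax _).2 rfl⟩,
      fun F₁ F₂ h₁ h₂ => by rw [(hmax F₁).1 h₁, (hmax F₂).1 h₂], fun F hF => ?_⟩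
    rw [(hmax F).1 hF, pretangentCl_seqInf]
    exact exists_isometry_vertexSet_of_forall_equivSeq Hanging.scale_pos _
      (Hanging.seq_mem_seqInf y₀) (Hanging.tendsto_dist_seq_seq y₀) hcover
  · rintro ⟨X, _, hX, r, hr, p, ⟨F, hF⟩, huniq, hiso⟩
    have hF_eq := eq_seqInf_of_pretangentCl_eq huniq hF
    obtain ⟨g, hg, hmem, hsurj, hρ⟩ := hiso F hF
    rw [hF_eq, pretangentCl_seqInf] at hmem hsurj
    exact exists_dist_injective_of_isometry_vertexSet hX hr (hF_eq ▸ hF.1) g hg hmem hsurj hρ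

/-- Corollary c2.2.24. A finite nonempty metric space `(Y, δ)` has a
point `y₀` whose distances to distinct points are distinct iff there exist an unbounded
metric space `(X, d)` and a scaling sequence `r̃` such that `(X, d)` has exactly one
pretangent space at infinity w.r.t. `r̃`, and this pretangent space is isometric to
`(Y, δ)` (the metric of a pretangent space being `ρ = ρ_X`). -/
theorem finite_space_unique_pretangent_iff {Y : Type*} [MetricSpace Y] [Fintype Y]
    [Nonempty Y] :
    (∃ y₀ : Y, ∀ x z : Y, x ≠ z → dist y₀ x ≠ dist y₀ z) ↔
    (∃ (X : Type) (_ : MetricSpace X), UnboundedSpace X ∧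
      ∃ r : ℕ → ℝ, ScalingSeq r ∧ ∃ p : X,
        (∃ F : Set (ℕ → X), MaxSelfStable r p F) ∧
        (∀ F₁ F₂ : Set (ℕ → X), MaxSelfStable r p F₁ → MaxSelfStable r p F₂ →
          PretangentCl r F₁ = PretangentCl r F₂) ∧
        (∀ F : Set (ℕ → X), MaxSelfStable r p F →
          ∃ g : Y → Set (ℕ → X),
            Function.Injective g ∧ (∀ y, g y ∈ PretangentCl r F) ∧
            (∀ v ∈ PretangentCl r F, ∃ y, g y = v) ∧
            ∀ y₁ y₂ : Y, rhoX r (g y₁) (g y₂) = dist y₁ y₂)) :=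
  finite_space_unique_pretangent_iff_general
end
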